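/- arXiv:2211.09763 — 3 statements merged into one kernel-verified Lean document; each statement's English description precedes it below -/
import Mathlib

section
/- Let p be a prime, l ≥ 1, and Λ = ℤ_p[[T_1,…,T_l]] the ring of formal multivariate power series over the p-adic integers. For m ∈ ℕ let I_m ⊆ Λ be the ideal generated by ω_m(T_i) = (1+T_i)^{p^m} − 1 for i = 1,…,l. Let L be a finitely generated Λ-module, let N ⊆ L be a Λ-submodule such that L_m := I_m·L ⊆ N for every m ∈ ℕ, and let I ⊆ Λ be an ideal. Suppose that for some m ∈ ℕ the quotients N/(I·N + L_m) and N/(I·N + L_{m+1}) are both finite and have the same cardinality. Then L_m ⊆ I·N; consequently I·N + L_k = I·N for every k ≥ m, the quotient N/(I·N) is finite, and N/(I·N + L_k) has the same cardinality as N/(I·N + L_m) for every k ≥ m. -/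
/-!
Since `ω_{m+1}(T) = ω_m(T) · Σ_{j<p} (1 + T)^{j p^m}` and the second factor has constant term `p`,
`I_{m+1} ⊆ 𝔪 I_m` for the maximal ideal `𝔪` of `Λ`, hence `L_{m+1} ⊆ 𝔪 L_m ⊆ L_m`. Equal
cardinalities force `I N + L_m = I N + L_{m+1} ⊆ I N + 𝔪 L_m`, and Nakayama's lemma, applied to
the finitely generated module `L_m`, gives `L_m ⊆ I N`. The remaining claims follow because the
`L_k` decrease.
-/

open Submodule IsLocalRing

theorem Submodule.eq_of_le_of_card_quotient_eq {R M : Type*} [Ring R] [AddCommGroup M]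
    [Module R M] {A B : Submodule R M} (hAB : A ≤ B) [hA : Finite (M ⧸ A)]
    (hcard : Nat.card (M ⧸ A) = Nat.card (M ⧸ B)) : A = B := by
  have : A.toAddSubgroup.FiniteIndex := @AddSubgroup.finiteIndex_of_finite_quotient _ _ _ hA
  exact hAB.eq_of_not_lt fun hlt =>
    (AddSubgroup.index_strictAnti (toAddSubgroup_strictMono hlt)).ne hcard.symm

theorem Ideal.geom_sum_mem {A : Type*} [CommRing A] {J : Ideal A} {x : A} (hx : x - 1 ∈ J)
    {n : ℕ} (hn : (n : A) ∈ J) : ∑ i ∈ Finset.range n, x ^ i ∈ J := by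
  rw [← Ideal.Quotient.eq_zero_iff_mem] at hn ⊢
  rw [← Ideal.Quotient.eq] at hx
  simpa [map_sum, hx] using hn

theorem Ideal.span_range_pow_sub_one_le_mul {A ι : Type*} [CommRing A] {J : Ideal A}
    {f : ι → A} (hf : ∀ i, f i - 1 ∈ J) {n : ℕ} (hn : (n : A) ∈ J) :
    Ideal.span (Set.range fun i => f i ^ n - 1) ≤ J * Ideal.span (Set.range fun i => f i - 1) := by
  rw [Ideal.span_le]
  rintro _ ⟨i, rfl⟩
  show f i ^ n - 1 ∈ J * _
  rw [← geom_sum_mul]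
  exact Ideal.mul_mem_mul (Ideal.geom_sum_mem (hf i) hn) (Ideal.subset_span ⟨i, rfl⟩)

theorem MvPowerSeries.mem_maximalIdeal_iff {σ R : Type*} [CommRing R] [IsLocalRing R]
    {φ : MvPowerSeries σ R} :
    φ ∈ maximalIdeal (MvPowerSeries σ R) ↔ constantCoeff φ ∈ maximalIdeal R := by
  simp only [mem_maximalIdeal, mem_nonunits_iff, isUnit_iff_constantCoeff]

theorem MvPowerSeries.span_one_add_X_pow_sub_one_succ_le {σ : Type*} (p : ℕ) [Fact p.Prime]
    (m : ℕ) :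
    Ideal.span (Set.range fun i : σ => ((1 + X i) ^ (p ^ (m + 1)) - 1 : MvPowerSeries σ ℤ_[p]))
      ≤ maximalIdeal (MvPowerSeries σ ℤ_[p]) *
        Ideal.span (Set.range fun i : σ => ((1 + X i) ^ (p ^ m) - 1 : MvPowerSeries σ ℤ_[p])) := by
  simp_rw [pow_succ, pow_mul]
  refine Ideal.span_range_pow_sub_one_le_mul (fun i => ?_) ?_ <;> rw [mem_maximalIdeal_iff]
  · simp
  · simpa using PadicInt.p_nonunit

theorem Submodule.le_smul_of_card_quotient_sup_eq {R M : Type*} [CommRing R] [IsLocalRing R]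
    [AddCommGroup M] [Module R M] {I : Ideal R} {N P Q : Submodule R M} (hP : P.FG)
    (hPN : P ≤ N) (hQP : Q ≤ maximalIdeal R • P)
    [Finite (N ⧸ comap N.subtype (I • N ⊔ Q))]
    (hcard : Nat.card (N ⧸ comap N.subtype (I • N ⊔ P)) =
      Nat.card (N ⧸ comap N.subtype (I • N ⊔ Q))) :
    P ≤ I • N := by
  have hIN : I • N ≤ N := smul_le_right
  have hQ : I • N ⊔ Q ≤ I • N ⊔ P := sup_le_sup_left (hQP.trans smul_le_right) _
  have hcomap := eq_of_le_of_card_quotient_eq (comap_mono (f := N.subtype) hQ) hcard.symm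
  have hPQ : I • N ⊔ P ≤ I • N ⊔ Q := by
    have := (comap_subtype_le_iff (p := N)).mp hcomap.ge
    rwa [inf_eq_right.mpr (sup_le hIN hPN), inf_eq_right.mpr (hQ.trans (sup_le hIN hPN))] at this
  refine le_of_le_smul_of_le_jacobson_bot hP (jacobson_eq_maximalIdeal ⊥ bot_ne_top).ge ?_
  exact le_sup_right.trans (hPQ.trans (sup_le_sup_left hQP _))

theorem fukuda_stabilisation_general (p : ℕ) [Fact p.Prime] (l : ℕ)
    (L : Type*) [AddCommGroup L] [Module (MvPowerSeries (Fin l) ℤ_[p]) L]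
    [Module.Finite (MvPowerSeries (Fin l) ℤ_[p]) L]
    (N : Submodule (MvPowerSeries (Fin l) ℤ_[p]) L)
    (Lm : ℕ → Submodule (MvPowerSeries (Fin l) ℤ_[p]) L)
    (hLm : ∀ m : ℕ, Lm m =
      (Ideal.span (Set.range fun i : Fin l =>
          ((1 + MvPowerSeries.X i) ^ (p ^ m) - 1 : MvPowerSeries (Fin l) ℤ_[p]))) •
        (⊤ : Submodule (MvPowerSeries (Fin l) ℤ_[p]) L))
    (hN : ∀ m : ℕ, Lm m ≤ N)
    (I : Ideal (MvPowerSeries (Fin l) ℤ_[p]))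
    (m : ℕ)
    (h1 : Finite (↥N ⧸ Submodule.comap N.subtype (I • N ⊔ Lm m)))
    (h2 : Finite (↥N ⧸ Submodule.comap N.subtype (I • N ⊔ Lm (m + 1))))
    (h3 : Nat.card (↥N ⧸ Submodule.comap N.subtype (I • N ⊔ Lm m)) =
          Nat.card (↥N ⧸ Submodule.comap N.subtype (I • N ⊔ Lm (m + 1)))) :
    Lm m ≤ I • N ∧
    (∀ k : ℕ, m ≤ k → I • N ⊔ Lm k = I • N) ∧
    Finite (↥N ⧸ Submodule.comap N.subtype (I • N)) ∧
    (∀ k : ℕ, m ≤ k →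
      Nat.card (↥N ⧸ Submodule.comap N.subtype (I • N ⊔ Lm k)) =
      Nat.card (↥N ⧸ Submodule.comap N.subtype (I • N ⊔ Lm m))) := by
  have hstep : ∀ k, Lm (k + 1) ≤ maximalIdeal (MvPowerSeries (Fin l) ℤ_[p]) • Lm k := fun k => by
    rw [hLm, hLm, ← Submodule.smul_assoc, Ideal.smul_eq_mul]
    exact smul_mono_left (MvPowerSeries.span_one_add_X_pow_sub_one_succ_le p k)
  have hanti : Antitone Lm := antitone_nat_of_succ_le fun k => (hstep k).trans smul_le_right
  have hfg : (Lm m).FG := by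
    rw [hLm]
    exact FG.smul (fg_span (Set.finite_range _)) Module.Finite.fg_top
  have hmain : Lm m ≤ I • N := le_smul_of_card_quotient_sup_eq hfg (hN m) (hstep m) h3
  have hsup : ∀ k, m ≤ k → I • N ⊔ Lm k = I • N := fun k hk =>
    sup_eq_left.mpr ((hanti hk).trans hmain)
  refine ⟨hmain, hsup, ?_, fun k hk => by rw [hsup k hk, hsup m le_rfl]⟩
  rwa [hsup m le_rfl] at h1

/-- Fukuda-type stabilisation, Theorem 2.5 of the reference / Thm 6.1 of the
paper. Let `Λ = ℤ_p[[T_1,…,T_l]]`, let `I_m` be the ideal generated by the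
`ω_m(T_i) = (1+T_i)^{p^m} − 1`, let `L` be a finitely generated `Λ`-module, `N ⊆ L` a submodule
containing `L_m := I_m·L` for every `m`, and `I ⊆ Λ` an ideal.  If for some `m` the quotients
`N/(I·N + L_m)` and `N/(I·N + L_{m+1})` are finite of the same cardinality, then
`L_m ⊆ I·N`; consequently `I·N + L_k = I·N` for all `k ≥ m`, `N/(I·N)` is finite, and
`N/(I·N + L_k)` has the same cardinality as `N/(I·N + L_m)` for every `k ≥ m`. -/
theorem fukuda_stabilisation (p : ℕ) [Fact p.Prime] (l : ℕ) (hl : 1 ≤ l)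
    (L : Type*) [AddCommGroup L] [Module (MvPowerSeries (Fin l) ℤ_[p]) L]
    [Module.Finite (MvPowerSeries (Fin l) ℤ_[p]) L]
    (N : Submodule (MvPowerSeries (Fin l) ℤ_[p]) L)
    (Lm : ℕ → Submodule (MvPowerSeries (Fin l) ℤ_[p]) L)
    (hLm : ∀ m : ℕ, Lm m =
      (Ideal.span (Set.range fun i : Fin l =>
          ((1 + MvPowerSeries.X i) ^ (p ^ m) - 1 : MvPowerSeries (Fin l) ℤ_[p]))) •
        (⊤ : Submodule (MvPowerSeries (Fin l) ℤ_[p]) L))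
    (hN : ∀ m : ℕ, Lm m ≤ N)
    (I : Ideal (MvPowerSeries (Fin l) ℤ_[p]))
    (m : ℕ)
    (h1 : Finite (↥N ⧸ Submodule.comap N.subtype (I • N ⊔ Lm m)))
    (h2 : Finite (↥N ⧸ Submodule.comap N.subtype (I • N ⊔ Lm (m + 1))))
    (h3 : Nat.card (↥N ⧸ Submodule.comap N.subtype (I • N ⊔ Lm m)) =
          Nat.card (↥N ⧸ Submodule.comap N.subtype (I • N ⊔ Lm (m + 1)))) :
    Lm m ≤ I • N ∧
    (∀ k : ℕ, m ≤ k → I • N ⊔ Lm k = I • N) ∧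
    Finite (↥N ⧸ Submodule.comap N.subtype (I • N)) ∧
    (∀ k : ℕ, m ≤ k →
      Nat.card (↥N ⧸ Submodule.comap N.subtype (I • N ⊔ Lm k)) =
      Nat.card (↥N ⧸ Submodule.comap N.subtype (I • N ⊔ Lm m))) :=
  fukuda_stabilisation_general p l L N Lm hLm hN I m h1 h2 h3
end

section
/- Let R be a unique factorization domain, let F be a free R-module, and let P ⊆ F be a submodule which is itself free (i.e., P admits an R-basis). Let x ∈ F and let a, c ∈ R be relatively prime elements (they have no common prime divisor). If a·x ∈ P and c·x ∈ P, then x ∈ P. -/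
/-!
Since `c • (a • x) = a • (c • x)`, the coordinates of `a • x` and `c • x` in a basis of `P`
satisfy `c * uᵢ = a * vᵢ`, so `a` divides every `uᵢ` because `a` and `c` are relatively prime.
Hence `a • x = a • z` for some `z ∈ P`, and `x = z` because `F` is torsion-free.
-/

namespace Module.Basis

variable {R M ι : Type*}

theorem exists_smul_eq_of_forall_dvd_repr [CommSemiring R] [AddCommMonoid M] [Module R M]
    (b : Basis ι R M) {a : R} {y : M} (h : ∀ i, a ∣ b.repr y i) : ∃ z, a • z = y := by
  choose d hd using h
  refine ⟨∑ i ∈ (b.repr y).support, d i • b i, ?_⟩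
  conv_rhs => rw [← b.linearCombination_repr y, Finsupp.linearCombination_apply, Finsupp.sum]
  simp only [Finset.smul_sum, smul_smul, ← hd]

theorem exists_smul_eq_of_smul_eq_smul [CommSemiring R] [DecompositionMonoid R]
    [AddCommMonoid M] [Module R M] (b : Basis ι R M) {a c : R} (hac : IsRelPrime a c)
    {u v : M} (h : c • u = a • v) : ∃ z, a • z = u :=
  b.exists_smul_eq_of_forall_dvd_repr fun i =>
    hac.dvd_of_dvd_mul_left ⟨b.repr v i, by simpa using congr(b.repr $h i)⟩

end Module.Basis

theorem Submodule.mem_of_smul_mem_of_isRelPrime {R F ι : Type*} [CommSemiring R] [IsDomain R]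
    [DecompositionMonoid R] [AddCommMonoid F] [Module R F] [Module.IsTorsionFree R F]
    {P : Submodule R F} (b : Module.Basis ι R P) {x : F} {a c : R} (ha : a ≠ 0)
    (hac : IsRelPrime a c) (hax : a • x ∈ P) (hcx : c • x ∈ P) : x ∈ P := by
  obtain ⟨z, hz⟩ := b.exists_smul_eq_of_smul_eq_smul hac
    (u := ⟨a • x, hax⟩) (v := ⟨c • x, hcx⟩) (Subtype.ext (smul_comm c a x))
  have hzx : (z : F) = x := smul_right_injective F ha congr(Subtype.val $hz)
  exact hzx ▸ z.2

/-- key step of Lemma 6.2 of the paper. Let `R` be a UFD, `F` a free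
`R`-module, and `P ⊆ F` a submodule which is itself free (it admits an `R`-basis).
If `x ∈ F` and `a, c ∈ R` are relatively prime with `a·x ∈ P` and `c·x ∈ P`,
then `x ∈ P`. -/
theorem mem_of_relPrime_smul_mem (R : Type*) [CommRing R] [IsDomain R]
    [UniqueFactorizationMonoid R]
    (F : Type*) [AddCommGroup F] [Module R F] [Module.Free R F]
    (P : Submodule R F) (ι : Type*) (b : Module.Basis ι R ↥P)
    (x : F) (a c : R) (hac : IsRelPrime a c)
    (hax : a • x ∈ P) (hcx : c • x ∈ P) : x ∈ P := by
  wlog ha : a ≠ 0 generalizing a c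
  · have hc : c ≠ 0 := by
      rintro rfl
      rw [not_not.mp ha, isRelPrime_self] at hac
      exact not_isUnit_zero hac
    exact this c a hac.symm hcx hax hc
  exact P.mem_of_smul_mem_of_isRelPrime b ha hac hax hcx
end

section
/- Let R be a commutative ring, n ≥ 4, and let x ∈ R be a unit. Let M be the n × n matrix over R with M₁₁ = M₂₂ = 2, M₁₂ = x, M₂₁ = x⁻¹, M_{ii} = 2 for 3 ≤ i ≤ n, M_{i,i+1} = M_{i+1,i} = −1 for 2 ≤ i ≤ n−1, M_{1,n} = M_{n,1} = −1, and all other entries 0. Then det M = 2 + x + x⁻¹; in particular, the determinant does not depend on n. -/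
set_option maxHeartbeats 4000000
set_option linter.unreachableTactic false
set_option linter.unusedTactic false

open Finset Matrix

section AuxVoltageCycle

variable {R : Type*} [CommRing R]

def pf (m : ℕ) (a b : R) : ℕ → ℕ → R := fun v w =>
  if v = 0 then (if w = 0 then a else if w = m+2 then -1 else if w = m+3 then 2 else 0)
  else if v = 1 then (if w = 0 then 2 else if w = 1 then -1 else if w = m+3 then b else 0)
  else if v = m+3 then (if w = m+1 then -1 else if w = m+2 then 2 else if w = m+3 then -1 else 0)
  else (if w = v - 2 then -1 else if w = v - 1 then 2 else if w = v then -1 else 0)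

def qf (m : ℕ) (a b : R) : ℕ → ℕ → R := fun v w =>
  if w = m+2 then (if v = m+2 then -1+((m:R)+3)*b else if v = m+3 then 2-((m:R)+2)*b else 0)
  else pf m a b v w

def uf (m : ℕ) (a b : R) : ℕ → ℕ → R := fun v w =>
  if w = m+3 then (if v = m+2 then -(((m:R)+4)*b) else if v = m+3 then -1+((m:R)+3)*b else 0)
  else qf m a b v w


@[simp] lemma val_mk' {N a : ℕ} (h : a < N) : ((⟨a, h⟩ : Fin N) : ℕ) = a := rfl


lemma sum_one' {N : ℕ} (f : Fin N → R) (i1 : Fin N)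
    (h : ∀ j, j ≠ i1 → f j = 0) : ∑ j, f j = f i1 :=
  Finset.sum_eq_single i1 (fun j _ hj => h j hj) (fun h' => absurd (Finset.mem_univ i1) h')

lemma sum_two' {N : ℕ} (f : Fin N → R) (i1 i2 : Fin N) (h12 : i1 ≠ i2)
    (h : ∀ j, j ≠ i1 → j ≠ i2 → f j = 0) : ∑ j, f j = f i1 + f i2 := by
  have : ∑ j, f j = ∑ j ∈ ({i1, i2} : Finset (Fin N)), f j := by
    refine (Finset.sum_subset (Finset.subset_univ _) ?_).symm
    intro j _ hj
    simp only [Finset.mem_insert, Finset.mem_singleton, not_or] at hj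
    exact h j hj.1 hj.2
  rw [this, Finset.sum_pair h12]

lemma sum_three' {N : ℕ} (f : Fin N → R) (i1 i2 i3 : Fin N)
    (h12 : i1 ≠ i2) (h13 : i1 ≠ i3) (h23 : i2 ≠ i3)
    (h : ∀ j, j ≠ i1 → j ≠ i2 → j ≠ i3 → f j = 0) : ∑ j, f j = f i1 + f i2 + f i3 := by
  have : ∑ j, f j = ∑ j ∈ ({i1, i2, i3} : Finset (Fin N)), f j := by
    refine (Finset.sum_subset (Finset.subset_univ _) ?_).symm
    intro j _ hj
    simp only [Finset.mem_insert, Finset.mem_singleton, not_or] at hj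
    exact h j hj.1 hj.2.1 hj.2.2
  rw [this, Finset.sum_insert (by simp [h12, h13]), Finset.sum_pair h23, add_assoc]


lemma val_succAbove' {N : ℕ} (p : Fin (N+1)) (i : Fin N) :
    ((p.succAbove i : Fin (N+1)) : ℕ) = if i.val < p.val then i.val else i.val + 1 := by
  rcases Fin.lt_or_le (Fin.castSucc i) p with h | h
  · rw [Fin.succAbove_of_castSucc_lt _ _ h]
    have := h; rw [Fin.lt_iff_val_lt_val] at this
    simp only [Fin.coe_castSucc] at this ⊢
    rw [if_pos this]
  · rw [Fin.succAbove_of_le_castSucc _ _ h]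
    have := h; rw [Fin.le_iff_val_le_val] at this
    simp only [Fin.coe_castSucc] at this
    rw [Fin.val_succ, if_neg (by omega)]

lemma prod_diag' (m : ℕ) (a s : R) :
    (∏ i : Fin (m+3), (if (i : ℕ) = 0 then a else if (i : ℕ) = m+2 then s else -1))
      = a * s * (-1)^(m+1) := by
  rw [Fin.prod_univ_eq_prod_range (fun k => if k = 0 then a else if k = m+2 then s else -1) (m+3)]
  rw [Finset.prod_range_succ]
  have h1 : (∏ k ∈ Finset.range (m+2), (if k = 0 then a else if k = m+2 then s else -1))
      = ∏ k ∈ Finset.range (m+2), (if k = 0 then a else -1) := by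
    refine Finset.prod_congr rfl fun k hk => ?_
    rw [Finset.mem_range] at hk
    by_cases h : k = 0
    · simp [h]
    · rw [if_neg h, if_neg h, if_neg (by omega)]
  rw [h1, if_neg (by omega), if_pos rfl]
  have h2 : (∏ k ∈ Finset.range (m+2), (if k = 0 then a else -1)) = a * (-1:R)^(m+1) := by
    rw [Finset.prod_range_succ']
    rw [Finset.prod_congr rfl (fun k _ => if_neg (Nat.succ_ne_zero k)), Finset.prod_const,
      Finset.card_range, if_pos rfl]
    ring
  rw [h2]; ring



lemma det_updateCol_add_sum' {R : Type*} [CommRing R] {N : ℕ} (A : Matrix (Fin N) (Fin N) R) (j : Fin N)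
    (c : Fin N → R) (hc : c j = 0) :
    (A.updateCol j (fun i => A i j + ∑ k, c k * A i k)).det = A.det := by
  have key : ∀ s : Finset (Fin N), j ∉ s →
      (A.updateCol j (fun i => A i j + ∑ k ∈ s, c k * A i k)).det = A.det := by
    intro s
    induction s using Finset.induction_on with
    | empty => intro _; simp [Matrix.updateCol_eq_self]
    | @insert k s hk ih =>
      intro hj
      have hkj : k ≠ j := fun h => hj (h ▸ Finset.mem_insert_self k s)
      have hjs : j ∉ s := fun h => hj (Finset.mem_insert_of_mem h)
      have : (fun i => A i j + ∑ t ∈ insert k s, c t * A i t)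
          = (fun i => (A i j + ∑ t ∈ s, c t * A i t) + c k * A i k) := by
        funext i; rw [Finset.sum_insert hk]; ring
      rw [this]
      rw [show (fun i => (A i j + ∑ t ∈ s, c t * A i t) + c k * A i k)
            = (fun i => A i j + ∑ t ∈ s, c t * A i t) + (c k • fun i => A i k) from rfl]
      rw [Matrix.det_updateCol_add, Matrix.det_updateCol_smul,
        Matrix.det_updateCol_eq_zero hkj, mul_zero, add_zero, ih hjs]
  have hj : j ∉ Finset.univ.erase j := Finset.notMem_erase j _
  have : (fun i => A i j + ∑ k, c k * A i k)
      = (fun i => A i j + ∑ k ∈ Finset.univ.erase j, c k * A i k) := by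
    funext i
    congr 1
    refine (Finset.sum_subset (Finset.erase_subset _ _) ?_).symm
    intro k _ hks
    have : k = j := by
      by_contra h
      exact hks (Finset.mem_erase.2 ⟨h, Finset.mem_univ k⟩)
    rw [this, hc, zero_mul]
  rw [this, key _ hj]

def mf {R : Type*} [CommRing R] (m : ℕ) (a b : R) : ℕ → ℕ → R := fun v w =>
  if (v = 0 ∧ w = 0) ∨ (v = 1 ∧ w = 1) then 2
  else if v = 0 ∧ w = 1 then a
  else if v = 1 ∧ w = 0 then b
  else if 2 ≤ v ∧ v = w then 2
  else if (1 ≤ v ∧ w = v + 1) ∨ (1 ≤ w ∧ v = w + 1) then -1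
  else if (v = 0 ∧ w = m + 3) ∨ (v = m + 3 ∧ w = 0) then -1
  else 0

lemma L1 {R : Type*} [CommRing R] (m : ℕ) (a b : R) :
    (Matrix.of fun i j : Fin (m+4) => pf m a b i.val j.val)
      = (Matrix.of fun i j : Fin (m+4) => mf m a b i.val j.val).submatrix id (finRotate (m+4)) := by
  ext i j
  rw [Matrix.submatrix_apply, id_eq, finRotate_succ_apply, Matrix.of_apply, Matrix.of_apply]
  have him : i.val < m + 4 := i.isLt
  by_cases hj : j = Fin.last (m+3)
  · have hjv : (j : ℕ) = m + 3 := by rw [hj]; rfl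
    have hadd : ((j+1 : Fin (m+4)) : ℕ) = 0 := by rw [hj, Fin.last_add_one]; rfl
    rw [hadd, hjv]
    simp only [pf, mf]
    split_ifs <;> first | rfl | exact ‹False›.elim | (exfalso; omega) |
      (exfalso; simp_all only [true_and, and_true, and_false, false_and, or_false, false_or,
        true_or, or_true, not_true, not_false_iff] <;> omega)
  · have hjl : j.val < m + 3 := Fin.val_lt_last hj
    have hadd : ((j+1 : Fin (m+4)) : ℕ) = j.val + 1 := by rw [Fin.val_add_one, if_neg hj]
    rw [hadd]
    simp only [pf, mf]
    split_ifs <;> first | rfl | exact ‹False›.elim | (exfalso; omega) |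
      (exfalso; simp_all only [true_and, and_true, and_false, false_and, or_false, false_or,
        true_or, or_true, not_true, not_false_iff] <;> omega)


lemma L2 (m : ℕ) (a b : R) (hab : a * b = 1) :
    (Matrix.of fun i j : Fin (m+4) => pf m a b i.val j.val).updateCol ⟨m+2, by omega⟩
      (fun i => (Matrix.of fun i j : Fin (m+4) => pf m a b i.val j.val) i ⟨m+2, by omega⟩
        + ∑ k : Fin (m+4), (if (k:ℕ) ≤ m+1 then (((k:ℕ):R)+1)*b else 0)
            * (Matrix.of fun i j : Fin (m+4) => pf m a b i.val j.val) i k)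
    = Matrix.of fun i j : Fin (m+4) => qf m a b i.val j.val := by
  ext i j
  rw [Matrix.updateCol_apply]
  by_cases hj : j = (⟨m+2, by omega⟩ : Fin (m+4))
  · rw [if_pos hj]
    have hjv : (j : ℕ) = m+2 := by rw [hj]
    have him : (i : ℕ) < m + 4 := i.isLt
    simp only [Matrix.of_apply, hjv, val_mk']
    rcases Nat.lt_or_ge (i : ℕ) 2 with hi | hi
    · rcases Nat.lt_or_ge (i : ℕ) 1 with hi0 | hi1
      · -- i = 0
        have hv : (i : ℕ) = 0 := by omega
        rw [sum_one' _ (⟨0, by omega⟩ : Fin (m+4)) ?_]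
        · have E0 : pf m a b 0 (m+2) = -1 := by
            simp only [pf]; split_ifs <;> first | rfl | exact ‹False›.elim | (exfalso; omega)
          have E1 : pf m a b 0 0 = a := by
            simp only [pf]; split_ifs <;> first | rfl | exact ‹False›.elim | (exfalso; omega)
          have Eq0 : qf m a b 0 (m+2) = 0 := by
            simp only [qf]; split_ifs <;> first | rfl | exact ‹False›.elim | (exfalso; omega)
          simp only [Matrix.of_apply, val_mk', hv]
          rw [E0, E1, Eq0, if_pos (show 0 ≤ m+1 by omega)]
          push_cast
          linear_combination hab
        · intro k hk
          have hk' : (k : ℕ) ≠ 0 := fun h => hk (Fin.ext h)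
          simp only [Matrix.of_apply, pf, hv]
          split_ifs <;> first | exact ‹False›.elim | (exfalso; omega) | ring
      · -- i = 1
        have hv : (i : ℕ) = 1 := by omega
        rw [sum_two' _ (⟨0, by omega⟩ : Fin (m+4)) (⟨1, by omega⟩ : Fin (m+4))
            (Fin.ne_of_val_ne (show (0:ℕ) ≠ 1 by omega)) ?_]
        · have E0 : pf m a b 1 (m+2) = 0 := by
            simp only [pf]; split_ifs <;> first | rfl | exact ‹False›.elim | (exfalso; omega)
          have E1 : pf m a b 1 0 = 2 := by
            simp only [pf]; split_ifs <;> first | rfl | exact ‹False›.elim | (exfalso; omega)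
          have E2 : pf m a b 1 1 = -1 := by
            simp only [pf]; split_ifs <;> first | rfl | exact ‹False›.elim | (exfalso; omega)
          have Eq0 : qf m a b 1 (m+2) = 0 := by
            simp only [qf]; split_ifs <;> first | rfl | exact ‹False›.elim | (exfalso; omega)
          simp only [Matrix.of_apply, val_mk', hv]
          rw [E0, E1, E2, Eq0, if_pos (show 0 ≤ m+1 by omega), if_pos (show 1 ≤ m+1 by omega)]
          push_cast
          ring
        · intro k hk0 hk1
          have hk0' : (k : ℕ) ≠ 0 := fun h => hk0 (Fin.ext h)
          have hk1' : (k : ℕ) ≠ 1 := fun h => hk1 (Fin.ext h)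
          simp only [Matrix.of_apply, pf, hv]
          split_ifs <;> first | exact ‹False›.elim | (exfalso; omega) | ring
    · rcases Nat.lt_or_ge (i : ℕ) (m+2) with hmid | hend
      · -- i = t+2, 2 ≤ i ≤ m+1
        obtain ⟨t, ht⟩ : ∃ t, (i : ℕ) = t + 2 := ⟨(i : ℕ) - 2, by omega⟩
        have ht1 : t + 2 ≤ m + 1 := by omega
        rw [sum_three' _ (⟨t, by omega⟩ : Fin (m+4)) (⟨t+1, by omega⟩ : Fin (m+4))
            (⟨t+2, by omega⟩ : Fin (m+4)) (Fin.ne_of_val_ne (show t ≠ t+1 by omega))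
            (Fin.ne_of_val_ne (show t ≠ t+2 by omega)) (Fin.ne_of_val_ne (show t+1 ≠ t+2 by omega)) ?_]
        · have E0 : pf m a b (t+2) (m+2) = 0 := by
            simp only [pf]; split_ifs <;> first | rfl | exact ‹False›.elim | (exfalso; omega)
          have E1 : pf m a b (t+2) t = -1 := by
            simp only [pf]; split_ifs <;> first | rfl | exact ‹False›.elim | (exfalso; omega)
          have E2 : pf m a b (t+2) (t+1) = 2 := by
            simp only [pf]; split_ifs <;> first | rfl | exact ‹False›.elim | (exfalso; omega)
          have E3 : pf m a b (t+2) (t+2) = -1 := by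
            simp only [pf]; split_ifs <;> first | rfl | exact ‹False›.elim | (exfalso; omega)
          have Eq0 : qf m a b (t+2) (m+2) = 0 := by
            simp only [qf]; split_ifs <;> first | rfl | exact ‹False›.elim | (exfalso; omega)
          simp only [Matrix.of_apply, val_mk', ht]
          rw [E0, E1, E2, E3, Eq0, if_pos (show t ≤ m+1 by omega),
            if_pos (show t+1 ≤ m+1 by omega), if_pos (show t+2 ≤ m+1 by omega)]
          push_cast
          ring
        · intro k hk0 hk1 hk2
          have hk0' : (k : ℕ) ≠ t := fun h => hk0 (Fin.ext h)
          have hk1' : (k : ℕ) ≠ t+1 := fun h => hk1 (Fin.ext h)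
          have hk2' : (k : ℕ) ≠ t+2 := fun h => hk2 (Fin.ext h)
          simp only [Matrix.of_apply, pf, ht]
          split_ifs <;> first | exact ‹False›.elim | (exfalso; omega) | ring
      · rcases Nat.lt_or_ge (i : ℕ) (m+3) with hend2 | hend3
        · -- i = m+2
          have hv : (i : ℕ) = m+2 := by omega
          rw [sum_two' _ (⟨m, by omega⟩ : Fin (m+4)) (⟨m+1, by omega⟩ : Fin (m+4))
              (Fin.ne_of_val_ne (show m ≠ m+1 by omega)) ?_]
          · have E0 : pf m a b (m+2) (m+2) = -1 := by
              simp only [pf]; split_ifs <;> first | rfl | exact ‹False›.elim | (exfalso; omega)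
            have E1 : pf m a b (m+2) m = -1 := by
              simp only [pf]; split_ifs <;> first | rfl | exact ‹False›.elim | (exfalso; omega)
            have E2 : pf m a b (m+2) (m+1) = 2 := by
              simp only [pf]; split_ifs <;> first | rfl | exact ‹False›.elim | (exfalso; omega)
            have Eq0 : qf m a b (m+2) (m+2) = -1+((m:R)+3)*b := by
              simp only [qf]; split_ifs <;> first | rfl | exact ‹False›.elim | (exfalso; omega)
            simp only [Matrix.of_apply, val_mk', hv]
            rw [E0, E1, E2, Eq0, if_pos (show m ≤ m+1 by omega),
              if_pos (show m+1 ≤ m+1 by omega)]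
            push_cast
            ring
          · intro k hk0 hk1
            have hk0' : (k : ℕ) ≠ m := fun h => hk0 (Fin.ext h)
            have hk1' : (k : ℕ) ≠ m+1 := fun h => hk1 (Fin.ext h)
            simp only [Matrix.of_apply, pf, hv]
            split_ifs <;> first | exact ‹False›.elim | (exfalso; omega) | ring
        · -- i = m+3
          have hv : (i : ℕ) = m+3 := by omega
          rw [sum_one' _ (⟨m+1, by omega⟩ : Fin (m+4)) ?_]
          · have E0 : pf m a b (m+3) (m+2) = 2 := by
              simp only [pf]; split_ifs <;> first | rfl | exact ‹False›.elim | (exfalso; omega)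
            have E1 : pf m a b (m+3) (m+1) = -1 := by
              simp only [pf]; split_ifs <;> first | rfl | exact ‹False›.elim | (exfalso; omega)
            have Eq0 : qf m a b (m+3) (m+2) = 2-((m:R)+2)*b := by
              simp only [qf]; split_ifs <;> first | rfl | exact ‹False›.elim | (exfalso; omega)
            simp only [Matrix.of_apply, val_mk', hv]
            rw [E0, E1, Eq0, if_pos (show m+1 ≤ m+1 by omega)]
            push_cast
            ring
          · intro k hk
            have hk' : (k : ℕ) ≠ m+1 := fun h => hk (Fin.ext h)
            simp only [Matrix.of_apply, pf, hv]
            split_ifs <;> first | exact ‹False›.elim | (exfalso; omega) | ring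
  · rw [if_neg hj]
    have hjv : (j : ℕ) ≠ m+2 := fun h => hj (Fin.ext h)
    simp only [Matrix.of_apply, qf, if_neg hjv]


lemma L3 (m : ℕ) (a b : R) (hab : a * b = 1) :
    (Matrix.of fun i j : Fin (m+4) => qf m a b i.val j.val).updateCol ⟨m+3, by omega⟩
      (fun i => (Matrix.of fun i j : Fin (m+4) => qf m a b i.val j.val) i ⟨m+3, by omega⟩
        + ∑ k : Fin (m+4), (if (k:ℕ) ≤ m+1 then -((((k:ℕ):R)+2)*b) else 0)
            * (Matrix.of fun i j : Fin (m+4) => qf m a b i.val j.val) i k)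
    = Matrix.of fun i j : Fin (m+4) => uf m a b i.val j.val := by
  ext i j
  rw [Matrix.updateCol_apply]
  by_cases hj : j = (⟨m+3, by omega⟩ : Fin (m+4))
  · rw [if_pos hj]
    have hjv : (j : ℕ) = m+3 := by rw [hj]
    have him : (i : ℕ) < m + 4 := i.isLt
    simp only [Matrix.of_apply, hjv, val_mk']
    rcases Nat.lt_or_ge (i : ℕ) 2 with hi | hi
    · rcases Nat.lt_or_ge (i : ℕ) 1 with hi0 | hi1
      · -- i = 0
        have hv : (i : ℕ) = 0 := by omega
        rw [sum_one' _ (⟨0, by omega⟩ : Fin (m+4)) ?_]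
        · have E0 : qf m a b 0 (m+3) = 2 := by
            simp only [qf, pf]; split_ifs <;> first | rfl | exact ‹False›.elim | (exfalso; omega)
          have E1 : qf m a b 0 0 = a := by
            simp only [qf, pf]; split_ifs <;> first | rfl | exact ‹False›.elim | (exfalso; omega)
          have Eu : uf m a b 0 (m+3) = 0 := by
            simp only [uf]; split_ifs <;> first | rfl | exact ‹False›.elim | (exfalso; omega)
          simp only [Matrix.of_apply, val_mk', hv]
          rw [E0, E1, Eu, if_pos (show 0 ≤ m+1 by omega)]
          push_cast
          linear_combination (-2 : R) * hab
        · intro k hk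
          have hk' : (k : ℕ) ≠ 0 := fun h => hk (Fin.ext h)
          simp only [Matrix.of_apply, qf, pf, hv]
          split_ifs <;> first | exact ‹False›.elim | (exfalso; omega) | ring
      · -- i = 1
        have hv : (i : ℕ) = 1 := by omega
        rw [sum_two' _ (⟨0, by omega⟩ : Fin (m+4)) (⟨1, by omega⟩ : Fin (m+4))
            (Fin.ne_of_val_ne (show (0:ℕ) ≠ 1 by omega)) ?_]
        · have E0 : qf m a b 1 (m+3) = b := by
            simp only [qf, pf]; split_ifs <;> first | rfl | exact ‹False›.elim | (exfalso; omega)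
          have E1 : qf m a b 1 0 = 2 := by
            simp only [qf, pf]; split_ifs <;> first | rfl | exact ‹False›.elim | (exfalso; omega)
          have E2 : qf m a b 1 1 = -1 := by
            simp only [qf, pf]; split_ifs <;> first | rfl | exact ‹False›.elim | (exfalso; omega)
          have Eu : uf m a b 1 (m+3) = 0 := by
            simp only [uf]; split_ifs <;> first | rfl | exact ‹False›.elim | (exfalso; omega)
          simp only [Matrix.of_apply, val_mk', hv]
          rw [E0, E1, E2, Eu, if_pos (show 0 ≤ m+1 by omega), if_pos (show 1 ≤ m+1 by omega)]
          push_cast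
          ring
        · intro k hk0 hk1
          have hk0' : (k : ℕ) ≠ 0 := fun h => hk0 (Fin.ext h)
          have hk1' : (k : ℕ) ≠ 1 := fun h => hk1 (Fin.ext h)
          simp only [Matrix.of_apply, qf, pf, hv]
          split_ifs <;> first | exact ‹False›.elim | (exfalso; omega) | ring
    · rcases Nat.lt_or_ge (i : ℕ) (m+2) with hmid | hend
      · -- i = t+2, 2 ≤ i ≤ m+1
        obtain ⟨t, ht⟩ : ∃ t, (i : ℕ) = t + 2 := ⟨(i : ℕ) - 2, by omega⟩
        have ht1 : t + 2 ≤ m + 1 := by omega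
        rw [sum_three' _ (⟨t, by omega⟩ : Fin (m+4)) (⟨t+1, by omega⟩ : Fin (m+4))
            (⟨t+2, by omega⟩ : Fin (m+4)) (Fin.ne_of_val_ne (show t ≠ t+1 by omega))
            (Fin.ne_of_val_ne (show t ≠ t+2 by omega))
            (Fin.ne_of_val_ne (show t+1 ≠ t+2 by omega)) ?_]
        · have E0 : qf m a b (t+2) (m+3) = 0 := by
            simp only [qf, pf]; split_ifs <;> first | rfl | exact ‹False›.elim | (exfalso; omega)
          have E1 : qf m a b (t+2) t = -1 := by
            simp only [qf, pf]; split_ifs <;> first | rfl | exact ‹False›.elim | (exfalso; omega)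
          have E2 : qf m a b (t+2) (t+1) = 2 := by
            simp only [qf, pf]; split_ifs <;> first | rfl | exact ‹False›.elim | (exfalso; omega)
          have E3 : qf m a b (t+2) (t+2) = -1 := by
            simp only [qf, pf]; split_ifs <;> first | rfl | exact ‹False›.elim | (exfalso; omega)
          have Eu : uf m a b (t+2) (m+3) = 0 := by
            simp only [uf]; split_ifs <;> first | rfl | exact ‹False›.elim | (exfalso; omega)
          simp only [Matrix.of_apply, val_mk', ht]
          rw [E0, E1, E2, E3, Eu, if_pos (show t ≤ m+1 by omega),
            if_pos (show t+1 ≤ m+1 by omega), if_pos (show t+2 ≤ m+1 by omega)]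
          push_cast
          ring
        · intro k hk0 hk1 hk2
          have hk0' : (k : ℕ) ≠ t := fun h => hk0 (Fin.ext h)
          have hk1' : (k : ℕ) ≠ t+1 := fun h => hk1 (Fin.ext h)
          have hk2' : (k : ℕ) ≠ t+2 := fun h => hk2 (Fin.ext h)
          simp only [Matrix.of_apply, qf, pf, ht]
          split_ifs <;> first | exact ‹False›.elim | (exfalso; omega) | ring
      · rcases Nat.lt_or_ge (i : ℕ) (m+3) with hend2 | hend3
        · -- i = m+2
          have hv : (i : ℕ) = m+2 := by omega
          rw [sum_two' _ (⟨m, by omega⟩ : Fin (m+4)) (⟨m+1, by omega⟩ : Fin (m+4))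
              (Fin.ne_of_val_ne (show m ≠ m+1 by omega)) ?_]
          · have E0 : qf m a b (m+2) (m+3) = 0 := by
              simp only [qf, pf]; split_ifs <;> first | rfl | exact ‹False›.elim | (exfalso; omega)
            have E1 : qf m a b (m+2) m = -1 := by
              simp only [qf, pf]; split_ifs <;> first | rfl | exact ‹False›.elim | (exfalso; omega)
            have E2 : qf m a b (m+2) (m+1) = 2 := by
              simp only [qf, pf]; split_ifs <;> first | rfl | exact ‹False›.elim | (exfalso; omega)
            have Eu : uf m a b (m+2) (m+3) = -(((m:R)+4)*b) := by
              simp only [uf]; split_ifs <;> first | rfl | exact ‹False›.elim | (exfalso; omega)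
            simp only [Matrix.of_apply, val_mk', hv]
            rw [E0, E1, E2, Eu, if_pos (show m ≤ m+1 by omega),
              if_pos (show m+1 ≤ m+1 by omega)]
            push_cast
            ring
          · intro k hk0 hk1
            have hk0' : (k : ℕ) ≠ m := fun h => hk0 (Fin.ext h)
            have hk1' : (k : ℕ) ≠ m+1 := fun h => hk1 (Fin.ext h)
            simp only [Matrix.of_apply, qf, pf, hv]
            split_ifs <;> first | exact ‹False›.elim | (exfalso; omega) | ring
        · -- i = m+3
          have hv : (i : ℕ) = m+3 := by omega
          rw [sum_one' _ (⟨m+1, by omega⟩ : Fin (m+4)) ?_]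
          · have E0 : qf m a b (m+3) (m+3) = -1 := by
              simp only [qf, pf]; split_ifs <;> first | rfl | exact ‹False›.elim | (exfalso; omega)
            have E1 : qf m a b (m+3) (m+1) = -1 := by
              simp only [qf, pf]; split_ifs <;> first | rfl | exact ‹False›.elim | (exfalso; omega)
            have Eu : uf m a b (m+3) (m+3) = -1+((m:R)+3)*b := by
              simp only [uf]; split_ifs <;> first | rfl | exact ‹False›.elim | (exfalso; omega)
            simp only [Matrix.of_apply, val_mk', hv]
            rw [E0, E1, Eu, if_pos (show m+1 ≤ m+1 by omega)]
            push_cast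
            ring
          · intro k hk
            have hk' : (k : ℕ) ≠ m+1 := fun h => hk (Fin.ext h)
            simp only [Matrix.of_apply, qf, pf, hv]
            split_ifs <;> first | exact ‹False›.elim | (exfalso; omega) | ring
  · rw [if_neg hj]
    have hjv : (j : ℕ) ≠ m+3 := fun h => hj (Fin.ext h)
    simp only [Matrix.of_apply, uf, if_neg hjv]


lemma L4 (m : ℕ) (a b : R) :
    (Matrix.of fun i j : Fin (m+4) => uf m a b i.val j.val).det
      = (-1:R)^(m+1) * (a * (1 + 2*b + b^2)) := by
  have hlast : ((Fin.last (m+3) : Fin (m+4)) : ℕ) = m+3 := rfl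
  rw [Matrix.det_succ_column _ (Fin.last (m+3))]
  rw [sum_two' _ (⟨m+2, by omega⟩ : Fin (m+4)) (Fin.last (m+3))
      (Fin.ne_of_val_ne (show m+2 ≠ m+3 by omega)) ?_]
  · -- the two surviving terms
    have hU1 : (Matrix.of fun i j : Fin (m+4) => uf m a b i.val j.val)
        (⟨m+2, by omega⟩ : Fin (m+4)) (Fin.last (m+3)) = -(((m:R)+4)*b) := by
      simp only [Matrix.of_apply, val_mk', hlast, uf]
      split_ifs <;> first | rfl | exact ‹False›.elim | (exfalso; omega)
    have hU2 : (Matrix.of fun i j : Fin (m+4) => uf m a b i.val j.val)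
        (Fin.last (m+3)) (Fin.last (m+3)) = -1+((m:R)+3)*b := by
      simp only [Matrix.of_apply, hlast, uf]
      split_ifs <;> first | rfl | exact ‹False›.elim | (exfalso; omega)
    -- minor 1 : remove row m+3, column m+3
    have hm1 : ((Matrix.of fun i j : Fin (m+4) => uf m a b i.val j.val).submatrix
        (Fin.last (m+3)).succAbove (Fin.last (m+3)).succAbove).det
        = a * (-1+((m:R)+3)*b) * (-1)^(m+1) := by
      rw [Fin.succAbove_last]
      rw [Matrix.det_of_lowerTriangular _ ?_]
      · rw [Finset.prod_congr rfl (fun i (_ : i ∈ Finset.univ) =>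
          (show ((Matrix.of fun i j : Fin (m+4) => uf m a b i.val j.val)).submatrix
              Fin.castSucc Fin.castSucc i i
            = (if (i : ℕ) = 0 then a else if (i : ℕ) = m+2 then -1+((m:R)+3)*b else -1) by
          have hb : (i : ℕ) < m + 3 := i.isLt
          simp only [Matrix.submatrix_apply, Matrix.of_apply, Fin.coe_castSucc, uf, qf, pf]
          split_ifs <;> first | rfl | exact ‹False›.elim | (exfalso; omega))), prod_diag']
      · intro i j hij
        rw [OrderDual.toDual_lt_toDual] at hij
        have hij' : (i : ℕ) < (j : ℕ) := hij
        have hb : (j : ℕ) < m + 3 := j.isLt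
        simp only [Matrix.submatrix_apply, Matrix.of_apply, Fin.coe_castSucc, uf, qf, pf]
        split_ifs <;> first | rfl | exact ‹False›.elim | (exfalso; omega)
    -- minor 2 : remove row m+2, column m+3
    have hm2 : ((Matrix.of fun i j : Fin (m+4) => uf m a b i.val j.val).submatrix
        (⟨m+2, by omega⟩ : Fin (m+4)).succAbove (Fin.last (m+3)).succAbove).det
        = a * (2-((m:R)+2)*b) * (-1)^(m+1) := by
      rw [Fin.succAbove_last]
      rw [Matrix.det_of_lowerTriangular _ ?_]
      · rw [Finset.prod_congr rfl (fun i (_ : i ∈ Finset.univ) =>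
          (show ((Matrix.of fun i j : Fin (m+4) => uf m a b i.val j.val)).submatrix
              (⟨m+2, by omega⟩ : Fin (m+4)).succAbove Fin.castSucc i i
            = (if (i : ℕ) = 0 then a else if (i : ℕ) = m+2 then 2-((m:R)+2)*b else -1) by
          have hb : (i : ℕ) < m + 3 := i.isLt
          have hr := val_succAbove' (⟨m+2, by omega⟩ : Fin (m+4)) i
          simp only [val_mk'] at hr
          simp only [Matrix.submatrix_apply, Matrix.of_apply, Fin.coe_castSucc, hr, uf, qf, pf]
          split_ifs <;> first | rfl | exact ‹False›.elim | (exfalso; omega))), prod_diag']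
      · intro i j hij
        rw [OrderDual.toDual_lt_toDual] at hij
        have hij' : (i : ℕ) < (j : ℕ) := hij
        have hb : (j : ℕ) < m + 3 := j.isLt
        have hbi : (i : ℕ) < m + 3 := i.isLt
        have hr := val_succAbove' (⟨m+2, by omega⟩ : Fin (m+4)) i
        simp only [val_mk'] at hr
        simp only [Matrix.submatrix_apply, Matrix.of_apply, Fin.coe_castSucc, hr, uf, qf, pf]
        split_ifs <;> first | rfl | exact ‹False›.elim | (exfalso; omega)
    rw [hU1, hU2, hm1, hm2]
    simp only [val_mk', hlast]
    rw [show (-1:R)^(m+2+(m+3)) = -1 from Odd.neg_one_pow ⟨m+2, by omega⟩,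
      show (-1:R)^(m+3+(m+3)) = 1 from Even.neg_one_pow ⟨m+3, by omega⟩]
    push_cast
    ring
  · intro k hk1 hk2
    have hk1' : (k : ℕ) ≠ m+2 := fun h => hk1 (Fin.ext h)
    have hk2' : (k : ℕ) ≠ m+3 := fun h => hk2 (Fin.ext (by rw [h]; rfl))
    have hU : (Matrix.of fun i j : Fin (m+4) => uf m a b i.val j.val) k (Fin.last (m+3)) = 0 := by
      simp only [Matrix.of_apply, hlast, uf]
      split_ifs <;> first | rfl | exact ‹False›.elim | (exfalso; omega)
    rw [hU]
    ring


end AuxVoltageCycle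


/-- Example 8.1 of the paper: cycle graph, no multiple edge, `a = 2`.
Over a commutative ring `R`, `n ≥ 4`, and a unit `x`, the voltage Laplacian matrix of the
cycle with `M₀₀ = M₁₁ = 2`, `M₀₁ = x`, `M₁₀ = x⁻¹`, `2` on the rest of the diagonal, `−1`
on the remaining sub/superdiagonal entries and corners, has determinant `2 + x + x⁻¹`;
in particular it does not depend on `n`. -/
theorem det_cycle_trivial_multiedge (R : Type*) [CommRing R] (n : ℕ) (hn : 4 ≤ n) (x : Rˣ)
    (M : Matrix (Fin n) (Fin n) R)
    (hM : M = Matrix.of fun i j : Fin n =>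
      if (i.val = 0 ∧ j.val = 0) ∨ (i.val = 1 ∧ j.val = 1) then 2
      else if i.val = 0 ∧ j.val = 1 then (x : R)
      else if i.val = 1 ∧ j.val = 0 then ((x⁻¹ : Rˣ) : R)
      else if 2 ≤ i.val ∧ i = j then 2
      else if (1 ≤ i.val ∧ j.val = i.val + 1) ∨ (1 ≤ j.val ∧ i.val = j.val + 1) then -1
      else if (i.val = 0 ∧ j.val = n - 1) ∨ (i.val = n - 1 ∧ j.val = 0) then -1
      else 0) :
    M.det = 2 + (x : R) + ((x⁻¹ : Rˣ) : R) := by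
  obtain ⟨m, rfl⟩ : ∃ m, n = m + 4 := ⟨n - 4, by omega⟩
  set a := (x : R) with ha
  set b := ((x⁻¹ : Rˣ) : R) with hb
  have hab : a * b = 1 := Units.mul_inv x
  have hM2 : M = Matrix.of fun i j : Fin (m+4) => mf m a b i.val j.val := by
    rw [hM]
    ext i j
    simp only [Matrix.of_apply, mf, Fin.ext_iff, show m + 4 - 1 = m + 3 from rfl]
  have hcy : (fun k : Fin (m+4) => if (k:ℕ) ≤ m+1 then (((k:ℕ):R)+1)*b else 0)
      (⟨m+2, by omega⟩ : Fin (m+4)) = 0 := by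
    simp only [val_mk']
    rw [if_neg (by omega)]
  have hcz : (fun k : Fin (m+4) => if (k:ℕ) ≤ m+1 then -((((k:ℕ):R)+2)*b) else 0)
      (⟨m+3, by omega⟩ : Fin (m+4)) = 0 := by
    simp only [val_mk']
    rw [if_neg (by omega)]
  have e2 : (Matrix.of fun i j : Fin (m+4) => qf m a b i.val j.val).det
      = (Matrix.of fun i j : Fin (m+4) => pf m a b i.val j.val).det := by
    have := det_updateCol_add_sum'
      (Matrix.of fun i j : Fin (m+4) => pf m a b i.val j.val) ⟨m+2, by omega⟩
      (fun k : Fin (m+4) => if (k:ℕ) ≤ m+1 then (((k:ℕ):R)+1)*b else 0) hcy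
    rw [L2 m a b hab] at this
    exact this
  have e3 : (Matrix.of fun i j : Fin (m+4) => uf m a b i.val j.val).det
      = (Matrix.of fun i j : Fin (m+4) => qf m a b i.val j.val).det := by
    have := det_updateCol_add_sum'
      (Matrix.of fun i j : Fin (m+4) => qf m a b i.val j.val) ⟨m+3, by omega⟩
      (fun k : Fin (m+4) => if (k:ℕ) ≤ m+1 then -((((k:ℕ):R)+2)*b) else 0) hcz
    rw [L3 m a b hab] at this
    exact this
  have e1 : (Matrix.of fun i j : Fin (m+4) => pf m a b i.val j.val).det
      = (-1:R)^(m+3) * M.det := by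
    rw [L1 m a b, ← hM2, Matrix.det_permute', sign_finRotate]
    push_cast
    ring
  have key : (-1:R)^(m+3) * M.det = (-1:R)^(m+1) * (a * (1 + 2*b + b^2)) := by
    rw [← e1, ← e2, ← e3, L4 m a b]
  have hsq : (-1:R)^(m+3) * (-1:R)^(m+3) = 1 := by
    rw [← pow_add]
    exact Even.neg_one_pow ⟨m+3, by omega⟩
  calc M.det = ((-1:R)^(m+3) * (-1:R)^(m+3)) * M.det := by rw [hsq, one_mul]
    _ = (-1:R)^(m+3) * ((-1:R)^(m+3) * M.det) := by ring
    _ = (-1:R)^(m+3) * ((-1:R)^(m+1) * (a * (1 + 2*b + b^2))) := by rw [key]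
    _ = ((-1:R)^(m+3) * (-1:R)^(m+1)) * (a * (1 + 2*b + b^2)) := by ring
    _ = a * (1 + 2*b + b^2) := by
        rw [← pow_add, Even.neg_one_pow ⟨m+2, by omega⟩, one_mul]
    _ = 2 + a + b := by linear_combination (2 + b) * hab
end
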